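/- arXiv:2106.01524 — 2 statements merged into one kernel-verified Lean document; each statement's English description precedes it below -/
import Mathlib

section
/- Let K be a Euclidean cubical complex in ℝⁿ and let τ, σ be cubes of K with τ a proper face of σ and min τ a free face of σ (hence τ is also a free face of σ). Let K' be the (τ, σ)-collapse of K and let K̂ be the (min τ, σ)-collapse of K. If v is a vertex of K' with max τ ⪯ v, then v is a vertex of K̂ and pastlk(K', v) = pastlk(K̂, v). -/
open Set

namespace DCC

/-- The real point corresponding to an integer point of `ℤⁿ`. -/
def toR {n : ℕ} (v : Fin n → ℤ) : Fin n → ℝ := fun i => (v i : ℝ)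

/-- `j ∈ {0,1}ⁿ`: every coordinate of `j` is `0` or `1`. -/
def IsBinary {n : ℕ} (j : Fin n → ℤ) : Prop := ∀ i, j i = 0 ∨ j i = 1

/-- The elementary cube `[v - j, v] = {x : v - j ⪯ x ⪯ v}` in `ℝⁿ`. -/
def cube {n : ℕ} (v j : Fin n → ℤ) : Set (Fin n → ℝ) := Set.Icc (toR (v - j)) (toR v)

/-- A subset of `ℝⁿ` which is an elementary cube. -/
def IsElemCube {n : ℕ} (σ : Set (Fin n → ℝ)) : Prop := ∃ v j, IsBinary j ∧ σ = cube v j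

/-- A Euclidean cubical complex: a finite union of elementary cubes. -/
def IsComplex {n : ℕ} (K : Set (Fin n → ℝ)) : Prop :=
  ∃ C : Finset ((Fin n → ℤ) × (Fin n → ℤ)),
    (∀ c ∈ C, IsBinary c.2) ∧ K = ⋃ c ∈ C, cube c.1 c.2

/-- The past link of `v` in `K`: all nonzero binary `j` with `[v - j, v] ⊆ K`. -/
def pastlk {n : ℕ} (K : Set (Fin n → ℝ)) (v : Fin n → ℤ) : Set (Fin n → ℤ) :=
  {j | IsBinary j ∧ j ≠ 0 ∧ cube v j ⊆ K}

/-- A maximal cube of `K`: a cube of `K` not properly contained in another cube of `K`. -/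
def IsMaximalCube {n : ℕ} (K σ : Set (Fin n → ℝ)) : Prop :=
  IsElemCube σ ∧ σ ⊆ K ∧ ∀ γ, IsElemCube γ → γ ⊆ K → σ ⊆ γ → γ = σ

/-- `τ` is a free face of the maximal cube `σ` in `K`: `τ` is a proper face of `σ` and
`σ` is the unique maximal cube of `K` containing `τ`. -/
def IsFreeFace {n : ℕ} (K τ σ : Set (Fin n → ℝ)) : Prop :=
  IsElemCube τ ∧ τ ⊂ σ ∧ IsMaximalCube K σ ∧
    ∀ γ, IsMaximalCube K γ → τ ⊆ γ → γ = σ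

/-- The `(τ, σ)`-collapse of `K`: the union of all cubes of `K` that do not contain `τ`. -/
def collapse {n : ℕ} (K τ : Set (Fin n → ℝ)) : Set (Fin n → ℝ) :=
  ⋃₀ {γ | IsElemCube γ ∧ γ ⊆ K ∧ ¬ τ ⊆ γ}

/-- The restriction `K|_σ` where `σ` has minimum vertex `a` and maximum vertex `b`:
the union of all cubes `γ` of `K` with `a ⪯ min γ` and `max γ ⪯ b`. -/
def restrict {n : ℕ} (K : Set (Fin n → ℝ)) (a b : Fin n → ℤ) : Set (Fin n → ℝ) :=
  ⋃₀ {γ | ∃ v j, IsBinary j ∧ γ = cube v j ∧ cube v j ⊆ K ∧ a ≤ v - j ∧ v ≤ b}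

/-- The geometric realization of the past link of `v` in `K`, as a subset of `ℝⁿ`:
the union over `j ∈ pastlk K v` of the convex hulls of `{v - eᵢ : jᵢ = 1}`. -/
def geomReal {n : ℕ} (K : Set (Fin n → ℝ)) (v : Fin n → ℤ) : Set (Fin n → ℝ) :=
  ⋃ j ∈ pastlk K v, convexHull ℝ ((fun i => toR v - Pi.single i (1 : ℝ)) '' {i | j i = 1})

/-- The space of dipaths in `K` from `p` to `q`, as a subspace of
`C([0,1], ℝⁿ)` with the compact-open topology. -/
def DipathSpace {n : ℕ} (K : Set (Fin n → ℝ)) (p q : Fin n → ℝ) :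
    Set C(unitInterval, Fin n → ℝ) :=
  {γ | (∀ t, γ t ∈ K) ∧ γ 0 = p ∧ γ 1 = q ∧ Monotone ⇑γ}

/-- The reachable complex `R(K, p)`: points of `K` reachable from `p` by a dipath in `K`. -/
def reach {n : ℕ} (K : Set (Fin n → ℝ)) (p : Fin n → ℝ) : Set (Fin n → ℝ) :=
  {q ∈ K | (DipathSpace K p q).Nonempty}

/-- `(τ, σ)` is an LPDC pair in `K` (where `K'` is the `(τ,σ)`-collapse of `K`):
for every vertex `v` of `K'`, the geometric realizations of the past links of `v`
in `K` and in `K'` are homotopy equivalent. -/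
def IsLPDCPair {n : ℕ} (K τ : Set (Fin n → ℝ)) : Prop :=
  ∀ v : Fin n → ℤ, toR v ∈ collapse K τ →
    Nonempty (ContinuousMap.HomotopyEquiv ↥(geomReal K v) ↥(geomReal (collapse K τ) v))


lemma toR_le_toR {n : ℕ} {a b : Fin n → ℤ} (h : a ≤ b) : toR a ≤ toR b := by
  intro i
  have := h i
  simp only [toR]
  exact_mod_cast this

lemma mem_cube_iff {n : ℕ} {v j : Fin n → ℤ} {x : Fin n → ℝ} :
    x ∈ cube v j ↔ toR (v - j) ≤ x ∧ x ≤ toR v := Iff.rfl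

theorem statement13 (n : ℕ) (hn : 0 < n) (K : Set (Fin n → ℝ)) (hK : IsComplex K)
    (vτ jτ vσ jσ : Fin n → ℤ) (hjτ : IsBinary jτ) (hjσ : IsBinary jσ)
    (hτK : cube vτ jτ ⊆ K) (hσK : cube vσ jσ ⊆ K)
    (hproper : cube vτ jτ ⊂ cube vσ jσ)
    (hfree : IsFreeFace K (cube (vτ - jτ) 0) (cube vσ jσ))
    (v : Fin n → ℤ) (hv : toR v ∈ collapse K (cube vτ jτ)) (hmax : vτ ≤ v) :
    toR v ∈ collapse K (cube (vτ - jτ) 0) ∧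
    pastlk (collapse K (cube vτ jτ)) v = pastlk (collapse K (cube (vτ - jτ) 0)) v := by
  clear hn hK hτK hσK hproper hfree vσ jσ hjσ
  -- the barycenter of τ
  set b : Fin n → ℝ := fun i => (vτ i : ℝ) - (jτ i : ℝ) / 2 with hbdef
  have hjτ_nonneg : ∀ i, (0 : ℤ) ≤ jτ i := by
    intro i; rcases hjτ i with h | h <;> omega
  have hbτ : b ∈ cube vτ jτ := by
    constructor <;> intro i <;>
      simp only [hbdef, toR, Pi.sub_apply, Int.cast_sub] <;>
      rcases hjτ i with h | h <;> simp [h] <;> linarith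
  -- Lemma A: any binary elementary cube containing b contains all of τ
  have lemA : ∀ w k : Fin n → ℤ, IsBinary k → b ∈ cube w k → cube vτ jτ ⊆ cube w k := by
    intro w k hk hb
    obtain ⟨h1, h2⟩ := hb
    have key : ∀ i, w i - k i ≤ vτ i - jτ i ∧ vτ i ≤ w i := by
      intro i
      have h1i := h1 i
      have h2i := h2 i
      simp only [hbdef, toR, Pi.sub_apply, Int.cast_sub] at h1i h2i
      rcases hjτ i with h | h
      · rw [h] at h1i h2i
        push_cast at h1i h2i
        have e1 : w i - k i ≤ vτ i := by
          exact_mod_cast (by push_cast; linarith : ((w i - k i : ℤ) : ℝ) ≤ ((vτ i : ℤ) : ℝ))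
        have e2 : vτ i ≤ w i := by
          exact_mod_cast (by push_cast; linarith : ((vτ i : ℤ) : ℝ) ≤ ((w i : ℤ) : ℝ))
        omega
      · rw [h] at h1i h2i
        push_cast at h1i h2i
        have hlt1 : ((w i - k i : ℤ) : ℝ) < ((vτ i : ℤ) : ℝ) := by push_cast; linarith
        have hlt2 : ((vτ i : ℤ) : ℝ) < ((w i + 1 : ℤ) : ℝ) := by push_cast; linarith
        have hz1 : w i - k i < vτ i := by exact_mod_cast hlt1
        have hz2 : vτ i < w i + 1 := by exact_mod_cast hlt2
        rw [h]; omega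
    apply Set.Icc_subset_Icc
    · exact toR_le_toR fun i => by have := (key i).1; simp only [Pi.sub_apply]; omega
    · exact toR_le_toR fun i => (key i).2
  have hK'K : collapse K (cube vτ jτ) ⊆ K :=
    Set.sUnion_subset fun γ hγ => hγ.2.1
  -- b is not in K'
  have hbK' : b ∉ collapse K (cube vτ jτ) := by
    rintro ⟨γ, ⟨⟨w, k, hk, rfl⟩, hγK, hnτ⟩, hbγ⟩
    exact hnτ (lemA w k hk hbγ)
  have hminτ_mem : toR (vτ - jτ) ∈ cube (vτ - jτ) 0 := by
    constructor <;> intro i <;> simp [toR]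
  -- Key lemma: cubes with top vertex v contained in K' are contained in K̂
  have lemC : ∀ j : Fin n → ℤ, IsBinary j → cube v j ⊆ collapse K (cube vτ jτ) →
      cube v j ⊆ collapse K (cube (vτ - jτ) 0) := by
    intro j hj hsub
    by_cases hc : toR (vτ - jτ) ∈ cube v j
    · exfalso
      have hτsub : cube vτ jτ ⊆ cube v j :=
        Set.Icc_subset_Icc hc.1 (toR_le_toR hmax)
      exact hbK' (hsub (hτsub hbτ))
    · intro x hx
      exact ⟨cube v j, ⟨⟨v, j, hj, rfl⟩, fun y hy => hK'K (hsub hy),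
        fun hss => hc (hss hminτ_mem)⟩, hx⟩
  -- K̂ ⊆ K'
  have hminτ_in_τ : toR (vτ - jτ) ∈ cube vτ jτ := by
    refine ⟨le_refl _, toR_le_toR fun i => ?_⟩
    have := hjτ_nonneg i; simp only [Pi.sub_apply]; omega
  have hhatsub : collapse K (cube (vτ - jτ) 0) ⊆ collapse K (cube vτ jτ) := by
    apply Set.sUnion_subset
    rintro γ ⟨hγe, hγK, hnm⟩
    intro x hx
    refine ⟨γ, ⟨hγe, hγK, fun hss => hnm ?_⟩, hx⟩
    intro y hy
    have hy' : y = toR (vτ - jτ) := by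
      obtain ⟨h1, h2⟩ := hy
      simp only [toR, Pi.sub_apply, sub_zero] at h1 h2
      exact le_antisymm (fun i => h2 i) (fun i => h1 i)
    subst hy'
    exact hss hminτ_in_τ
  constructor
  · -- toR v ∈ K̂
    have h0bin : IsBinary (0 : Fin n → ℤ) := fun i => Or.inl rfl
    have hv0 : cube v 0 ⊆ collapse K (cube vτ jτ) := by
      intro x hx
      have hxv : x = toR v := by
        obtain ⟨h1, h2⟩ := hx
        simp only [toR, Pi.sub_apply, sub_zero] at h1 h2 ⊢
        exact le_antisymm h2 h1
      subst hxv; exact hv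
    apply lemC 0 h0bin hv0
    constructor <;> intro i <;> simp [toR]
  · ext j
    simp only [pastlk, Set.mem_setOf_eq]
    constructor
    · rintro ⟨h1, h2, h3⟩
      exact ⟨h1, h2, lemC j h1 h3⟩
    · rintro ⟨h1, h2, h3⟩
      exact ⟨h1, h2, h3.trans hhatsub⟩

end DCC
end

section
/- Let K be a Euclidean cubical complex in ℝⁿ, let σ be a cube of K, and let τ be a vertex of σ with τ ≠ min σ. Suppose τ is a free face of σ and let K' be the (τ, σ)-collapse of K. Then for every vertex v of K with v ≠ τ, the geometric realizations of pastlk(K, v) and pastlk(K', v) are homotopy equivalent. -/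
open Set

namespace DCC

section AuxLemmas

variable {n : ℕ}

lemma toR_le {a b : Fin n → ℤ} : toR a ≤ toR b ↔ a ≤ b := by
  simp [toR, Pi.le_def]

lemma toR_mem_cube {v j τ : Fin n → ℤ} : toR τ ∈ cube v j ↔ v - j ≤ τ ∧ τ ≤ v := by
  simp [cube, Set.mem_Icc, toR_le]

lemma cube_mono {v v' j j' : Fin n → ℤ} (h1 : v' - j' ≤ v - j) (h2 : v ≤ v') :
    cube v j ⊆ cube v' j' :=
  Set.Icc_subset_Icc (toR_le.2 h1) (toR_le.2 h2)

lemma IsBinary.nonneg {j : Fin n → ℤ} (hj : IsBinary j) : (0 : Fin n → ℤ) ≤ j := by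
  intro i; rcases hj i with h | h <;> simp [h]

lemma cube_subset_iff {v v' j j' : Fin n → ℤ} (hj : IsBinary j) :
    cube v j ⊆ cube v' j' ↔ v' - j' ≤ v - j ∧ v ≤ v' := by
  constructor
  · intro h
    have h1 : toR (v - j) ∈ cube v j := by
      refine toR_mem_cube.2 ⟨le_refl _, ?_⟩
      intro i; have := hj i; simp only [Pi.sub_apply]; omega
    have h2 : toR v ∈ cube v j := by
      refine toR_mem_cube.2 ⟨?_, le_refl _⟩
      intro i; have := hj i; simp only [Pi.sub_apply]; omega
    exact ⟨(toR_mem_cube.1 (h h1)).1, (toR_mem_cube.1 (h h2)).2⟩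
  · rintro ⟨h1, h2⟩; exact cube_mono h1 h2

lemma cube_zero' (τ : Fin n → ℤ) : cube τ 0 = {toR τ} := by
  simp [cube, sub_zero, Set.Icc_self]

lemma collapse_subset {K T : Set (Fin n → ℝ)} : collapse K T ⊆ K :=
  Set.sUnion_subset fun _ hγ => hγ.2.1

lemma tau_not_mem_collapse {K : Set (Fin n → ℝ)} {τ : Fin n → ℤ} :
    toR τ ∉ collapse K (cube τ 0) := by
  rintro ⟨γ, ⟨_, _, hγ⟩, hmem⟩
  exact hγ (by rw [cube_zero']; exact Set.singleton_subset_iff.2 hmem)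

lemma pastlk_collapse {K : Set (Fin n → ℝ)} (τ v : Fin n → ℤ) :
    pastlk (collapse K (cube τ 0)) v =
      {j | j ∈ pastlk K v ∧ ¬ (v - j ≤ τ ∧ τ ≤ v)} := by
  ext j
  constructor
  · rintro ⟨hb, hne, hsub⟩
    refine ⟨⟨hb, hne, hsub.trans collapse_subset⟩, ?_⟩
    rintro ⟨h1, h2⟩
    exact tau_not_mem_collapse (hsub (toR_mem_cube.2 ⟨h1, h2⟩))
  · rintro ⟨⟨hb, hne, hsub⟩, hnr⟩
    refine ⟨hb, hne, ?_⟩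
    refine Set.subset_sUnion_of_mem ⟨⟨v, j, hb, rfl⟩, hsub, ?_⟩
    intro hcon
    exact hnr (toR_mem_cube.1 (hcon (by rw [cube_zero']; rfl)))

/-- Every cube of `K` is contained in a maximal cube of `K`. -/
lemma exists_maximal_cube {K : Set (Fin n → ℝ)} :
    ∀ N (v j : Fin n → ℤ), IsBinary j → cube v j ⊆ K →
      (Finset.univ.filter (fun i => j i = 0)).card = N →
      ∃ γ, IsMaximalCube K γ ∧ cube v j ⊆ γ := by
  intro N
  induction N using Nat.strong_induction_on with
  | _ N ih =>
    intro v j hj hsub hcard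
    by_cases hmax : ∀ γ, IsElemCube γ → γ ⊆ K → cube v j ⊆ γ → γ = cube v j
    · exact ⟨cube v j, ⟨⟨v, j, hj, rfl⟩, hsub, hmax⟩, subset_rfl⟩
    · push_neg at hmax
      obtain ⟨γ, ⟨v', j', hj', rfl⟩, hγK, hγ, hne⟩ := hmax
      obtain ⟨h1, h2⟩ := (cube_subset_iff hj).1 hγ
      have hle : ∀ i, j i ≤ j' i := by
        intro i; have a1 := h1 i; have a2 : v i ≤ v' i := h2 i
        simp only [Pi.sub_apply] at a1; omega
      have hjne : j ≠ j' := by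
        rintro rfl
        apply hne
        have : v' = v := by
          funext i; have a1 := h1 i; have a2 : v i ≤ v' i := h2 i
          simp only [Pi.sub_apply] at a1; omega
        rw [this]
      have hss : (Finset.univ.filter (fun i => j' i = 0)) ⊂
          (Finset.univ.filter (fun i => j i = 0)) := by
        constructor
        · intro i hi
          simp only [Finset.mem_filter, Finset.mem_univ, true_and] at hi ⊢
          have := hle i; have := hj i; omega
        · intro hcon
          apply hjne
          funext i
          have := hle i; have := hj i; have := hj' i
          by_contra hne2
          have hi : i ∈ Finset.univ.filter (fun i => j i = 0) := by
            simp only [Finset.mem_filter, Finset.mem_univ, true_and]; omega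
          have := hcon hi
          simp only [Finset.mem_filter, Finset.mem_univ, true_and] at this
          omega
      obtain ⟨γ, hγmax, hγ'⟩ := ih _ (hcard ▸ Finset.card_lt_card hss) v' j' hj' hγK rfl
      exact ⟨γ, hγmax, hγ.trans hγ'⟩

lemma mem_hull_iff {v j : Fin n → ℤ} (hj : IsBinary j) {y : Fin n → ℝ} :
    y ∈ convexHull ℝ ((fun i => toR v - Pi.single i (1 : ℝ)) '' {i | j i = 1}) ↔
      (∀ i, 0 ≤ (v i : ℝ) - y i) ∧ (∑ i, ((v i : ℝ) - y i)) = 1 ∧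
        (∀ i, j i = 0 → y i = (v i : ℝ)) := by
  constructor
  · intro hy
    have hmin : convexHull ℝ ((fun i => toR v - Pi.single i (1 : ℝ)) '' {i | j i = 1}) ⊆
        {y : Fin n → ℝ | (∀ i, 0 ≤ (v i : ℝ) - y i) ∧ (∑ i, ((v i : ℝ) - y i)) = 1 ∧
          (∀ i, j i = 0 → y i = (v i : ℝ))} := by
      apply convexHull_min
      · rintro _ ⟨i₀, hi₀, rfl⟩
        refine ⟨?_, ?_, ?_⟩
        · intro i
          simp only [toR, Pi.sub_apply, Pi.single_apply]
          split <;> norm_num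
        · have : ∀ i, (v i : ℝ) - (toR v - Pi.single i₀ 1 : Fin n → ℝ) i
              = if i = i₀ then 1 else 0 := by
            intro i; simp [toR, Pi.single_apply, eq_comm]
          rw [Finset.sum_congr rfl fun i _ => this i]
          simp
        · intro i hji
          have hji₀ : j i₀ = 1 := hi₀
          have : i ≠ i₀ := by rintro rfl; omega
          simp [toR, Pi.single_apply, this]
      · rintro y1 ⟨p1, s1, e1⟩ y2 ⟨p2, s2, e2⟩ a b ha hb hab
        refine ⟨?_, ?_, ?_⟩
        · intro i
          have key : (v i : ℝ) - (a • y1 + b • y2) i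
              = a * ((v i : ℝ) - y1 i) + b * ((v i : ℝ) - y2 i) := by
            simp only [Pi.add_apply, Pi.smul_apply, smul_eq_mul]
            linear_combination (-(v i : ℝ)) * hab
          rw [key]
          have := p1 i; have := p2 i
          positivity
        · have key : ∀ i, (v i : ℝ) - (a • y1 + b • y2) i
              = a * ((v i : ℝ) - y1 i) + b * ((v i : ℝ) - y2 i) := by
            intro i
            simp only [Pi.add_apply, Pi.smul_apply, smul_eq_mul]
            linear_combination (-(v i : ℝ)) * hab
          rw [Finset.sum_congr rfl fun i _ => key i, Finset.sum_add_distrib,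
            ← Finset.mul_sum, ← Finset.mul_sum, s1, s2]
          linarith
        · intro i hji
          simp only [Pi.add_apply, Pi.smul_apply, smul_eq_mul, e1 i hji, e2 i hji]
          linear_combination (v i : ℝ) * hab
    exact hmin hy
  · rintro ⟨h0, h1, h2⟩
    classical
    set S : Finset (Fin n) := Finset.univ.filter (fun i => j i = 1) with hS
    set wt : Fin n → ℝ := fun i => (v i : ℝ) - y i with hwt
    have hoff : ∀ i, i ∉ S → wt i = 0 := by
      intro i hi
      have : j i = 0 := by
        rcases hj i with h | h
        · exact h
        · exact absurd (by simp [hS, h]) hi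
      simp [hwt, h2 i this]
    have hsum : ∑ i ∈ S, wt i = 1 := by
      rw [Finset.sum_subset (Finset.subset_univ S) (fun x _ hx => hoff x hx)]
      exact h1
    have hy_eq : y = S.centerMass wt (fun i => toR v - Pi.single i (1 : ℝ)) := by
      rw [Finset.centerMass_eq_of_sum_1 _ _ hsum]
      funext k
      rw [Finset.sum_apply]
      have : ∀ i ∈ S, (wt i • (toR v - Pi.single i 1 : Fin n → ℝ) : Fin n → ℝ) k
          = wt i * (v k : ℝ) - (if k = i then wt i else 0) := by
        intro i _
        simp only [Pi.smul_apply, Pi.sub_apply, smul_eq_mul, toR, Pi.single_apply]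
        split <;> ring
      rw [Finset.sum_congr rfl this, Finset.sum_sub_distrib, ← Finset.sum_mul, hsum,
        Finset.sum_ite_eq S k (fun i => wt i)]
      by_cases hk : k ∈ S
      · simp only [hk, if_true, hwt]; ring
      · simp only [hk, if_false, one_mul]
        have := hoff k hk
        simp only [hwt] at this
        linarith
    rw [hy_eq]
    apply Finset.centerMass_mem_convexHull
    · intro i _; exact h0 i
    · rw [hsum]; norm_num
    · intro i hi
      exact ⟨i, by simpa [hS] using hi, rfl⟩

lemma mem_geomReal_iff {K : Set (Fin n → ℝ)} {v : Fin n → ℤ} {y : Fin n → ℝ} :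
    y ∈ geomReal K v ↔ ∃ j ∈ pastlk K v,
      (∀ i, 0 ≤ (v i : ℝ) - y i) ∧ (∑ i, ((v i : ℝ) - y i)) = 1 ∧
        (∀ i, j i = 0 → y i = (v i : ℝ)) := by
  simp only [geomReal, Set.mem_iUnion]
  constructor
  · rintro ⟨j, hj, hy⟩
    exact ⟨j, hj, (mem_hull_iff hj.1).1 hy⟩
  · rintro ⟨j, hj, hy⟩
    exact ⟨j, hj, (mem_hull_iff hj.1).2 hy⟩

end AuxLemmas


theorem statement14 (n : ℕ) (hn : 0 < n) (K : Set (Fin n → ℝ)) (hK : IsComplex K)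
    (vσ jσ : Fin n → ℤ) (hjσ : IsBinary jσ) (hσK : cube vσ jσ ⊆ K)
    (τ : Fin n → ℤ) (hτ1 : vσ - jσ ≤ τ) (hτ2 : τ ≤ vσ) (hτmin : τ ≠ vσ - jσ)
    (hfree : IsFreeFace K (cube τ 0) (cube vσ jσ))
    (v : Fin n → ℤ) (hv : toR v ∈ K) (hvτ : v ≠ τ) :
    Nonempty (ContinuousMap.HomotopyEquiv
      ↥(geomReal K v) ↥(geomReal (collapse K (cube τ 0)) v)) := by
  classical
  have hPL : pastlk (collapse K (cube τ 0)) v =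
      {j | j ∈ pastlk K v ∧ ¬ (v - j ≤ τ ∧ τ ≤ v)} := pastlk_collapse τ v
  have hsubσ : ∀ j : Fin n → ℤ, IsBinary j → cube v j ⊆ K → v - j ≤ τ → τ ≤ v →
      cube v j ⊆ cube vσ jσ := by
    intro j hjb hjK ht1 ht2
    obtain ⟨γ, hγmax, hγ⟩ := exists_maximal_cube _ v j hjb hjK rfl
    have hτγ : cube τ 0 ⊆ γ := by
      rw [cube_zero']
      exact Set.singleton_subset_iff.2 (hγ (toR_mem_cube.2 ⟨ht1, ht2⟩))
    rw [← hfree.2.2.2 γ hγmax hτγ]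
    exact hγ
  by_cases hA : (τ ≤ v ∧ (∀ i, v i ≤ τ i + 1) ∧ cube v (v - τ) ⊆ K)
  case neg =>
    have hPLeq : pastlk (collapse K (cube τ 0)) v = pastlk K v := by
      rw [hPL]
      ext j
      simp only [Set.mem_setOf_eq]
      refine ⟨fun h => h.1, fun hj => ⟨hj, ?_⟩⟩
      rintro ⟨h1, h2⟩
      refine hA ⟨h2, ?_, ?_⟩
      · intro i
        have a1 : v i - j i ≤ τ i := by simpa using h1 i
        have a2 := hj.1 i
        omega
      · refine (cube_mono ?_ le_rfl).trans hj.2.2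
        intro i
        have a1 : v i - j i ≤ τ i := by simpa using h1 i
        simp only [Pi.sub_apply, sub_sub_cancel]
        omega
    have hgeq : geomReal (collapse K (cube τ 0)) v = geomReal K v := by
      simp only [geomReal, hPLeq]
    exact ⟨(Homeomorph.setCongr hgeq.symm).toHomotopyEquiv⟩
  case pos =>
    obtain ⟨hτv, hvτ1, hdK⟩ := hA
    have hdb : IsBinary (v - τ) := by
      intro i
      have a1 : τ i ≤ v i := hτv i
      have a2 := hvτ1 i
      simp only [Pi.sub_apply]
      omega
    have hdσ : cube v (v - τ) ⊆ cube vσ jσ := by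
      refine hsubσ _ hdb hdK ?_ hτv
      intro i
      simp only [Pi.sub_apply, sub_sub_cancel, le_refl]
    obtain ⟨hσ1, hσ2⟩ := (cube_subset_iff hdb).1 hdσ
    have hσ1' : ∀ i, vσ i - jσ i ≤ τ i := by
      intro i
      have := hσ1 i
      simpa [sub_sub_cancel] using this
    have hσ2' : ∀ i, v i ≤ vσ i := fun i => hσ2 i
    set m : Fin n → ℤ := fun i => min 1 (v i - vσ i + jσ i) with hm
    have hmb : IsBinary m := by
      intro i
      have := hσ1' i; have := hσ2' i; have h3 : τ i ≤ v i := hτv i; have := hjσ i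
      simp only [hm]
      omega
    have hdm : ∀ i, v i - τ i ≤ m i := by
      intro i
      have := hσ1' i; have := hvτ1 i; have h3 : τ i ≤ v i := hτv i
      simp only [hm]
      omega
    have hmK : cube v m ⊆ K := by
      refine (cube_mono ?_ hσ2).trans hσK
      intro i
      have := hσ2' i
      simp only [Pi.sub_apply, hm]
      omega
    obtain ⟨i0, hi0⟩ : ∃ i, τ i ≠ vσ i - jσ i := by
      by_contra h
      push_neg at h
      exact hτmin (funext fun i => by simpa [Pi.sub_apply] using h i)
    have hτσ : τ i0 = vσ i0 ∧ jσ i0 = 1 := by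
      have a1 : vσ i0 - jσ i0 ≤ τ i0 := by simpa using hτ1 i0
      have a2 : τ i0 ≤ vσ i0 := hτ2 i0
      have := hjσ i0
      omega
    have hvi0 : v i0 = τ i0 := by
      have := hσ2' i0
      have h3 : τ i0 ≤ v i0 := hτv i0
      omega
    have hmi0 : m i0 = 1 := by
      simp only [hm]
      omega
    set D : Finset (Fin n) := Finset.univ.filter (fun i => τ i < v i) with hD
    have hmemD : ∀ i, i ∈ D ↔ τ i < v i := by
      intro i; simp [hD]
    have hDne : D.Nonempty := by
      rcases Finset.eq_empty_or_nonempty D with h | h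
      · exfalso
        apply hvτ
        funext i
        have hni : i ∉ D := h ▸ Finset.notMem_empty i
        rw [hmemD] at hni
        have h3 : τ i ≤ v i := hτv i
        omega
      · exact h
    have hi0D : i0 ∉ D := by
      rw [hmemD]
      omega
    have hmL : m ∈ pastlk K v := by
      refine ⟨hmb, ?_, hmK⟩
      intro h0
      have := congrFun h0 i0
      rw [hmi0] at this
      simp at this
    set w : Fin n → ℝ :=
      fun i => (if i ∈ D then (1:ℝ) else 0) - (if i = i0 then (D.card : ℝ) else 0) with hw
    have hwD : ∀ i ∈ D, w i = 1 := by
      intro i hi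
      simp only [hw]
      rw [if_pos hi, if_neg (by rintro rfl; exact hi0D hi)]
      ring
    have hwi0 : w i0 = -(D.card : ℝ) := by
      simp only [hw]
      simp [hi0D]
    have hw0 : ∀ i, i ∉ D → i ≠ i0 → w i = 0 := by
      intro i h1 h2
      simp only [hw]
      rw [if_neg h1, if_neg h2]
      ring
    have hwsum : ∑ i, w i = 0 := by
      simp only [hw]
      rw [Finset.sum_sub_distrib]
      rw [Finset.sum_ite_eq' Finset.univ i0 (fun _ => (D.card : ℝ))]
      simp [Finset.sum_boole, Finset.filter_mem_eq_inter]
    set f : (Fin n → ℝ) → ℝ :=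
      fun y => max 0 (D.inf' hDne (fun i => (v i : ℝ) - y i)) with hf
    have hfc : Continuous f := by
      rw [hf]
      exact continuous_const.max
        (Continuous.finset_inf'_apply hDne fun i _ => continuous_const.sub (continuous_apply i))
    set Φ : ℝ → (Fin n → ℝ) → (Fin n → ℝ) := fun t y i => y i + t * f y * w i with hΦ
    -- auxiliary: the support vector of a point is in the past link
    have hjsA : ∀ (y : Fin n → ℝ) (j : Fin n → ℤ), j ∈ pastlk K v →
        (∑ i, ((v i : ℝ) - y i)) = 1 → (∀ i, j i = 0 → y i = (v i : ℝ)) →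
        (fun k => if y k = (v k : ℝ) then (0:ℤ) else 1) ∈ pastlk K v := by
      intro y j hjL hxsum hxsupp
      have hjsb : IsBinary (fun k => if y k = (v k : ℝ) then (0:ℤ) else 1) := by
        intro k; dsimp only; split <;> simp
      have hjsle : ∀ k, (if y k = (v k : ℝ) then (0:ℤ) else 1) ≤ j k := by
        intro k
        rcases hjL.1 k with h | h
        · simp [h, hxsupp k h]
        · have := hjsb k
          simp only at this
          omega
      refine ⟨hjsb, ?_, ?_⟩
      · intro h0
        have hone : (1:ℝ) = 0 := by
          rw [← hxsum]
          apply Finset.sum_eq_zero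
          intro i _
          have hh := congrFun h0 i
          simp only [Pi.zero_apply] at hh
          by_cases hne : y i = (v i : ℝ)
          · rw [hne]; ring
          · rw [if_neg hne] at hh
            exact absurd hh one_ne_zero
        exact one_ne_zero hone
      · refine (cube_mono ?_ le_rfl).trans hjL.2.2
        intro k
        have := hjsle k
        simp only [Pi.sub_apply]
        omega
    -- auxiliary: if all D-coordinates are interior, the support is bounded by m
    have hjsB : ∀ (y : Fin n → ℝ),
        (∀ i ∈ D, y i ≠ (v i : ℝ)) →
        (fun k => if y k = (v k : ℝ) then (0:ℤ) else 1) ∈ pastlk K v →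
        ∀ k, (if y k = (v k : ℝ) then (0:ℤ) else 1) ≤ m k := by
      intro y hyD hjsL k
      have hd : v - (fun k => if y k = (v k : ℝ) then (0:ℤ) else 1) ≤ τ := by
        intro k'
        simp only [Pi.sub_apply]
        by_cases hk : k' ∈ D
        · rw [if_neg (hyD k' hk)]
          have := hvτ1 k'
          omega
        · rw [hmemD] at hk
          have h3 : τ k' ≤ v k' := hτv k'
          split <;> omega
      have hss := (cube_subset_iff hjsL.1).1 (hsubσ _ hjsL.1 hjsL.2.2 hd hτv)
      have h1 : vσ k - jσ k ≤ v k - (if y k = (v k : ℝ) then (0:ℤ) else 1) := by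
        simpa using hss.1 k
      have := hjsL.1 k
      simp only at this
      simp only [hm]
      omega
    -- the key homotopy invariance
    have hmain : ∀ (t : ℝ), 0 ≤ t → t ≤ 1 → ∀ y ∈ geomReal K v,
        Φ t y ∈ geomReal K v ∧
          (t = 1 → Φ t y ∈ geomReal (collapse K (cube τ 0)) v) := by
      intro t ht0 ht1 y hy
      obtain ⟨j, hjL, hx0, hxsum, hxsupp⟩ := mem_geomReal_iff.1 hy
      obtain ⟨iw, hiw, hsw⟩ := Finset.exists_mem_eq_inf' hDne (fun i => (v i : ℝ) - y i)
      set s := D.inf' hDne (fun i => (v i : ℝ) - y i) with hs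
      have hsw' : s = (v iw : ℝ) - y iw := hsw
      have hiwD : τ iw < v iw := (hmemD iw).1 hiw
      by_cases hspos : 0 < s
      · -- positive case: points get moved
        have hfy : f y = s := by
          simp only [hf, ← hs]
          exact max_eq_right hspos.le
        have hsD : ∀ i ∈ D, s ≤ (v i : ℝ) - y i := fun i hi => Finset.inf'_le _ hi
        have hyD : ∀ i ∈ D, y i ≠ (v i : ℝ) := by
          intro i hi hcon
          have h1 := hsD i hi
          rw [hcon] at h1
          simp only [sub_self] at h1
          linarith
        have hjsL := hjsA y j hjL hxsum hxsupp
        have hjsm := hjsB y hyD hjsL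
        have hsupp_m : ∀ i, m i = 0 → y i = (v i : ℝ) := by
          intro i hmi
          have h1 := hjsm i
          rw [hmi] at h1
          by_contra hne
          rw [if_neg hne] at h1
          omega
        have ha : ∀ i, 0 ≤ (v i : ℝ) - Φ t y i := by
          intro i
          have hstep : (v i : ℝ) - Φ t y i = ((v i : ℝ) - y i) - t * f y * w i := by
            simp only [hΦ]; ring
          rw [hstep, hfy]
          by_cases hiD : i ∈ D
          · rw [hwD i hiD]
            have h1 := hsD i hiD
            nlinarith
          · by_cases hii0 : i = i0
            · rw [hii0, hwi0]
              have h1 := hx0 i0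
              have hc0 : (0:ℝ) ≤ (D.card : ℝ) := Nat.cast_nonneg _
              nlinarith [mul_nonneg (mul_nonneg ht0 hspos.le) hc0]
            · rw [hw0 i hiD hii0, mul_zero, sub_zero]
              exact hx0 i
        have hb : (∑ i, ((v i : ℝ) - Φ t y i)) = 1 := by
          have hstep : ∀ i, (v i : ℝ) - Φ t y i = ((v i : ℝ) - y i) - t * f y * w i := by
            intro i; simp only [hΦ]; ring
          rw [Finset.sum_congr rfl fun i _ => hstep i, Finset.sum_sub_distrib, hxsum,
            ← Finset.mul_sum, hwsum]
          ring
        have hc : ∀ i, m i = 0 → Φ t y i = (v i : ℝ) := by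
          intro i hmi
          have hiD : i ∉ D := by
            intro hi
            rw [hmemD] at hi
            have := hdm i
            omega
          have hine : i ≠ i0 := by
            intro h
            subst h
            omega
          simp only [hΦ]
          rw [hw0 i hiD hine, hsupp_m i hmi]
          ring
        refine ⟨mem_geomReal_iff.2 ⟨m, hmL, ha, hb, hc⟩, ?_⟩
        intro ht
        subst ht
        have hiwv : Φ 1 y iw = (v iw : ℝ) := by
          simp only [hΦ]
          rw [hfy, hwD iw hiw, hsw']
          ring
        rw [mem_geomReal_iff]
        refine ⟨(fun k => if Φ 1 y k = (v k : ℝ) then (0:ℤ) else 1), ?_, ha, hb, ?_⟩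
        · rw [hPL]
          refine ⟨hjsA (Φ 1 y) m hmL hb hc, ?_⟩
          rintro ⟨hc1, _⟩
          have h2 : (v iw : ℤ) ≤ τ iw := by simpa [hiwv] using hc1 iw
          omega
        · intro i hi
          by_contra hne
          simp [hne] at hi
      · -- nonpositive case: the point is fixed
        have hfy : f y = 0 := by
          simp only [hf, ← hs]
          exact max_eq_left (not_lt.1 hspos)
        have hfix : Φ t y = y := by
          funext i
          simp only [hΦ, hfy]
          ring
        rw [hfix]
        refine ⟨hy, ?_⟩
        intro _
        have hxiw : y iw = (v iw : ℝ) := by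
          have h1 := hx0 iw
          have h2 : (v iw : ℝ) - y iw ≤ 0 := by
            rw [← hsw']
            exact not_lt.1 hspos
          linarith
        rw [mem_geomReal_iff]
        refine ⟨(fun k => if y k = (v k : ℝ) then (0:ℤ) else 1), ?_, hx0, hxsum, ?_⟩
        · rw [hPL]
          refine ⟨hjsA y j hjL hxsum hxsupp, ?_⟩
          rintro ⟨hc1, _⟩
          have h2 : (v iw : ℤ) ≤ τ iw := by simpa [hxiw] using hc1 iw
          omega
        · intro i hi
          by_contra hne
          simp [hne] at hi
    -- points of the collapsed realization are fixed
    have hfixB : ∀ y ∈ geomReal (collapse K (cube τ 0)) v, f y = 0 := by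
      intro y hy
      obtain ⟨j', hj', hx0, hxsum, hxsupp⟩ := mem_geomReal_iff.1 hy
      rw [hPL] at hj'
      obtain ⟨hj'L, hj'nr⟩ := hj'
      obtain ⟨iw, hiw, hsw⟩ := Finset.exists_mem_eq_inf' hDne (fun i => (v i : ℝ) - y i)
      set s := D.inf' hDne (fun i => (v i : ℝ) - y i) with hs
      have hsle : s ≤ 0 := by
        by_contra hcon
        push_neg at hcon
        have hsD : ∀ i ∈ D, s ≤ (v i : ℝ) - y i := fun i hi => Finset.inf'_le _ hi
        apply hj'nr
        refine ⟨?_, hτv⟩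
        intro k
        simp only [Pi.sub_apply]
        by_cases hk : k ∈ D
        · have h1 := hsD k hk
          have hyk : y k ≠ (v k : ℝ) := by
            intro h
            rw [h] at h1
            simp only [sub_self] at h1
            linarith
          have hj'k : j' k = 1 := by
            rcases hj'L.1 k with h | h
            · exact absurd (hxsupp k h) hyk
            · exact h
          have := hvτ1 k
          omega
        · rw [hmemD] at hk
          have h3 : τ k ≤ v k := hτv k
          have := hj'L.1 k
          omega
      simp only [hf, ← hs]
      exact max_eq_left hsle
    -- assemble the homotopy equivalence
    have hBA : geomReal (collapse K (cube τ 0)) v ⊆ geomReal K v := by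
      intro y hy
      obtain ⟨j, hj, hc⟩ := mem_geomReal_iff.1 hy
      rw [hPL] at hj
      exact mem_geomReal_iff.2 ⟨j, hj.1, hc⟩
    have hcont1 : Continuous fun y : Fin n → ℝ => Φ 1 y := by
      apply continuous_pi
      intro i
      simp only [hΦ]
      exact (continuous_apply i).add ((continuous_const.mul hfc).mul continuous_const)
    set r : C(↥(geomReal K v), ↥(geomReal (collapse K (cube τ 0)) v)) :=
      ⟨fun a => ⟨Φ 1 (a : Fin n → ℝ), (hmain 1 zero_le_one le_rfl _ a.2).2 rfl⟩,
        (hcont1.comp continuous_subtype_val).subtype_mk _⟩ with hr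
    set ι : C(↥(geomReal (collapse K (cube τ 0)) v), ↥(geomReal K v)) :=
      ⟨Set.inclusion hBA, continuous_inclusion hBA⟩ with hι
    have hreq : r.comp ι = ContinuousMap.id _ := by
      apply ContinuousMap.ext
      intro b
      apply Subtype.ext
      show Φ 1 (b : Fin n → ℝ) = (b : Fin n → ℝ)
      have h0 := hfixB _ b.2
      funext i
      simp only [hΦ, h0]
      ring
    have hH : ContinuousMap.Homotopy (ContinuousMap.id ↥(geomReal K v)) (ι.comp r) := by
      refine
        { toFun := fun p => ⟨Φ ((p.1 : ℝ)) (p.2 : Fin n → ℝ),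
            (hmain (p.1 : ℝ) p.1.2.1 p.1.2.2 _ p.2.2).1⟩
          continuous_toFun := ?_
          map_zero_left := ?_
          map_one_left := ?_ }
      · apply Continuous.subtype_mk
        apply continuous_pi
        intro i
        simp only [hΦ]
        have c2 : Continuous fun p : unitInterval × ↥(geomReal K v) => (p.2 : Fin n → ℝ) :=
          continuous_subtype_val.comp continuous_snd
        have c1 : Continuous fun p : unitInterval × ↥(geomReal K v) => (p.1 : ℝ) :=
          continuous_subtype_val.comp continuous_fst
        exact ((continuous_apply i).comp c2).add ((c1.mul (hfc.comp c2)).mul continuous_const)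
      · intro x
        apply Subtype.ext
        show Φ ((0 : unitInterval) : ℝ) (x : Fin n → ℝ) = (x : Fin n → ℝ)
        funext i
        simp [hΦ]
      · intro x
        apply Subtype.ext
        show Φ ((1 : unitInterval) : ℝ) (x : Fin n → ℝ) = Φ 1 (x : Fin n → ℝ)
        norm_num
    exact ⟨⟨r, ι, ⟨hH.symm⟩, hreq ▸ ContinuousMap.Homotopic.refl _⟩⟩

end DCC
end
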